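/- For every positive integer N and complex numbers a, b, the truncated symplectic Schur multiple zeta function of the one-row shape (2) satisfies ζ_{(2)}^{sp,N}(a,b) = ζ^{⋆,N}(a,b) + ζ^{⋆,N}(−a,−b) + ζ^{⋆,N}(−a,b) + ζ^{⋆,N}(a,−b) − ζ^{⋆,N}(b−a), where ζ^{⋆,N}(s,t) = Σ_{0<m_1≤m_2≤N} m_1^{−s}m_2^{−t} and ζ^{⋆,N}(s) = Σ_{m=1}^N m^{−s}. -/
import Mathlib


noncomputable section

/-! The alphabet `[N̄] = {1 < 1̄ < 2 < 2̄ < ⋯ < N < N̄}` is encoded by ranks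
`1,…,2N`: the letter `i` is `2i-1` (odd) and `ī` is `2i` (even); `|i| = i`,
`|ī| = i⁻¹`, and the base is `(rank+1)/2` in both cases.  For the orthogonal
alphabet `[N̄]^∞` the extra letter `∞` is encoded by `2N+1` and has `|∞| = 1`. -/

/-- The weight `|t|^{-a}` of the letter with rank `t`. -/
def spwt (t : ℕ) (a : ℂ) : ℂ :=
  if Odd t then ((((t + 1) / 2 : ℕ)) : ℂ) ^ (-a) else ((((t + 1) / 2 : ℕ)) : ℂ) ^ a

/-- The weight of a letter of the orthogonal alphabet `[N̄]^∞`
(`∞` contributes `1`). -/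
def sowt (N t : ℕ) (a : ℂ) : ℂ := if t = 2 * N + 1 then 1 else spwt t a

/-- The truncated zeta function `ζ^N(a) = ∑_{m=1}^N m^{-a}` (this is also
`ζ^{⋆,N}(a)`). -/
def zN (N : ℕ) (a : ℂ) : ℂ := ∑ m ∈ Finset.Icc 1 N, (m : ℂ) ^ (-a)

/-- The truncated double zeta function
`ζ^N(a,b) = ∑_{0 < m_1 < m_2 ≤ N} m_1^{-a} m_2^{-b}`. -/
def zN2 (N : ℕ) (a b : ℂ) : ℂ :=
  ∑ p ∈ (Finset.Icc 1 N ×ˢ Finset.Icc 1 N).filter (fun p => p.1 < p.2),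
    (p.1 : ℂ) ^ (-a) * (p.2 : ℂ) ^ (-b)

/-- The truncated double zeta star function
`ζ^{⋆,N}(a,b) = ∑_{0 < m_1 ≤ m_2 ≤ N} m_1^{-a} m_2^{-b}`. -/
def zS2 (N : ℕ) (a b : ℂ) : ℂ :=
  ∑ p ∈ (Finset.Icc 1 N ×ˢ Finset.Icc 1 N).filter (fun p => p.1 ≤ p.2),
    (p.1 : ℂ) ^ (-a) * (p.2 : ℂ) ^ (-b)

open Finset

lemma spwt_odd (m : ℕ) (hm : 1 ≤ m) (a : ℂ) : spwt (2*m-1) a = (m:ℂ)^(-a) := by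
  have h : Odd (2*m-1) := ⟨m-1, by omega⟩
  rw [spwt, if_pos h]
  congr 2
  omega

lemma spwt_even (m : ℕ) (a : ℂ) : spwt (2*m) a = (m:ℂ)^a := by
  rw [spwt, if_neg (by simp [Nat.odd_iff, Nat.mul_mod_right])]
  congr 2
  omega

lemma sum_pair (n : ℕ) (f : ℕ → ℂ) :
    ∑ t ∈ Icc 1 (2*n), f t = ∑ m ∈ Icc 1 n, (f (2*m-1) + f (2*m)) := by
  induction n with
  | zero => simp
  | succ k ih =>
    have h1 : 2*(k+1) = (2*k+1)+1 := by ring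
    rw [h1, Finset.sum_Icc_succ_top (by omega), Finset.sum_Icc_succ_top (by omega), ih,
        Finset.sum_Icc_succ_top (Nat.le_add_left 1 k)]
    have e1 : 2*(k+1)-1 = 2*k+1 := by omega
    have e2 : 2*(k+1) = 2*k+1+1 := by omega
    rw [e1, e2]
    ring

lemma sum_tri (M : ℕ) (g h : ℕ → ℂ) :
    ∑ p ∈ (Icc 1 M ×ˢ Icc 1 M).filter (fun p => p.1 ≤ p.2), g p.1 * h p.2
      = ∑ t2 ∈ Icc 1 M, h t2 * ∑ t1 ∈ Icc 1 t2, g t1 := by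
  rw [Finset.sum_filter, Finset.sum_product, Finset.sum_comm]
  refine Finset.sum_congr rfl fun t2 ht2 => ?_
  rw [← Finset.sum_filter]
  have hf : (Icc 1 M).filter (fun t1 => t1 ≤ t2) = Icc 1 t2 := by
    ext x
    simp only [Finset.mem_filter, Finset.mem_Icc] at *
    omega
  rw [hf, Finset.mul_sum]
  exact Finset.sum_congr rfl fun t1 _ => mul_comm _ _
lemma zS2_eq (N : ℕ) (x y : ℂ) :
    zS2 N x y = ∑ m2 ∈ Icc 1 N, (m2:ℂ)^(-y) * ∑ m1 ∈ Icc 1 m2, (m1:ℂ)^(-x) :=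
  sum_tri N (fun t => (t:ℂ)^(-x)) (fun t => (t:ℂ)^(-y))


/-- **Row-shape symplectic Schur MZF.**  For every positive integer `N` and
`a, b ∈ ℂ`, the truncated symplectic Schur multiple zeta function of the
one-row shape `(2)` — the sum over weakly increasing pairs `t_1 ≤ t_2` of
letters of `[N̄]` of `|t_1|^{-a} |t_2|^{-b}` — satisfies
`ζ_{(2)}^{sp,N}(a,b) = ζ^{⋆,N}(a,b) + ζ^{⋆,N}(-a,-b) + ζ^{⋆,N}(-a,b)
 + ζ^{⋆,N}(a,-b) − ζ^{⋆,N}(b-a)`. -/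
theorem zeta_sp_row (N : ℕ) (hN : 0 < N) (a b : ℂ) :
    ∑ p ∈ (Finset.Icc 1 (2 * N) ×ˢ Finset.Icc 1 (2 * N)).filter
        (fun p => p.1 ≤ p.2),
      spwt p.1 a * spwt p.2 b =
    zS2 N a b + zS2 N (-a) (-b) + zS2 N (-a) b + zS2 N a (-b) - zN N (b - a) := by
  rw [sum_tri (2*N) (fun t => spwt t a) (fun t => spwt t b),
      sum_pair N (fun t => spwt t b * ∑ t1 ∈ Icc 1 t, spwt t1 a),
      zS2_eq, zS2_eq, zS2_eq, zS2_eq, zN]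
  simp only [neg_neg]
  rw [← Finset.sum_add_distrib, ← Finset.sum_add_distrib, ← Finset.sum_add_distrib,
      ← Finset.sum_sub_distrib]
  refine Finset.sum_congr rfl fun m hm => ?_
  rw [Finset.mem_Icc] at hm
  have hm1 : 1 ≤ m := hm.1
  have hF2 : ∑ t ∈ Icc 1 (2*m), spwt t a
      = (∑ k ∈ Icc 1 m, (k:ℂ)^(-a)) + ∑ k ∈ Icc 1 m, (k:ℂ)^a := by
    rw [sum_pair, ← Finset.sum_add_distrib]
    refine Finset.sum_congr rfl fun k hk => ?_
    rw [Finset.mem_Icc] at hk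
    rw [spwt_odd k hk.1, spwt_even]
  have hF1 : ∑ t ∈ Icc 1 (2*m-1), spwt t a
      = (∑ k ∈ Icc 1 m, (k:ℂ)^(-a)) + (∑ k ∈ Icc 1 m, (k:ℂ)^a) - (m:ℂ)^a := by
    have h : ∑ t ∈ Icc 1 (2*m), spwt t a
        = ∑ t ∈ Icc 1 (2*m-1), spwt t a + spwt (2*m) a := by
      have h2 : 2*m = (2*m-1)+1 := by omega
      rw [h2, Finset.sum_Icc_succ_top (by omega)]; norm_num
    rw [hF2, spwt_even] at h
    linear_combination -h
  rw [hF1, hF2, spwt_odd m hm1, spwt_even]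
  have hpow : (m:ℂ)^(-(b-a)) = (m:ℂ)^a * (m:ℂ)^(-b) := by
    have hne : (m:ℂ) ≠ 0 := Nat.cast_ne_zero.mpr (by omega)
    rw [show -(b-a) = a + -b by ring, Complex.cpow_add _ _ hne]
  rw [hpow]
  ring
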